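/- arXiv:2102.02521 — 4 statements merged into one kernel-verified Lean document; each statement's English description precedes it below -/
import Mathlib

section
/- For every s ∈ (0,1) and every γ > 0, the smoothed von Mises resolvent R_s is Lipschitz continuous with constant 1, i.e. |R_s(τ) − R_s(σ)| ≤ |τ − σ| for all σ, τ ∈ ℝ^{d×d}_s. -/
open scoped Classical

/-- The Frobenius inner product `σ : τ = trace (σ τ)` on (symmetric) matrices. -/
noncomputable def frob {d : ℕ} (A B : Matrix (Fin d) (Fin d) ℝ) : ℝ :=
  Matrix.trace (A * B)

/-- The norm induced by the Frobenius inner product (on symmetric matrices). -/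
noncomputable def fnorm {d : ℕ} (A : Matrix (Fin d) (Fin d) ℝ) : ℝ :=
  Real.sqrt (frob A A)

/-- The deviator `τ^D = τ - (trace τ / d) • I`. -/
noncomputable def dev {d : ℕ} (A : Matrix (Fin d) (Fin d) ℝ) : Matrix (Fin d) (Fin d) ℝ :=
  A - (Matrix.trace A / (d : ℝ)) • (1 : Matrix (Fin d) (Fin d) ℝ)

/-- The smoothed max function `max_s`. -/
noncomputable def maxs (s r : ℝ) : ℝ :=
  if s ≤ |r| then max 0 r else (r + s) ^ 2 / (4 * s)

/-- The smoothed von Mises resolvent `R_s`. -/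
noncomputable def Rs {d : ℕ} (s γ : ℝ) (τ : Matrix (Fin d) (Fin d) ℝ) :
    Matrix (Fin d) (Fin d) ℝ :=
  if dev τ = 0 then τ else τ - maxs s (1 - γ / fnorm (dev τ)) • dev τ

/-!
Write `k x = 1 - max_s (1 - γ / x)`, so that `R_s τ = (tr τ / d) I + k(|τ^D|) τ^D`. The spherical
and deviatoric parts are orthogonal, so it suffices that `a ↦ k(|a|) a` is nonexpansive. By
`|p a - q b|² = (p|a| - q|b|)² + 2pq (|a||b| - a : b)` this follows from `0 ≤ k ≤ 1` and the
`1`-Lipschitz continuity of `φ x = k x * x` on `[0, ∞)`, which holds because both `φ` and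
`x - φ x = max_s (1 - γ / x) * x` are nondecreasing. The second is so because `max_s` is; the first
because `φ x = γ (max_s 1 - max_s u) / (1 - u)`, with `u = 1 - γ / x`, is a secant slope of the
convex function `max_s` (and `max_s 1 = 1`).
-/

section SmoothedMax

variable {s : ℝ}

/- `max_s r` is the supremum over `a ∈ [0, 1]` of the affine functions `a r + s a (1 - a)`,
attained at `a = clamp ((r + s) / (2 s))`. -/
lemma affine_le_maxs (hs : 0 < s) {a : ℝ} (ha : a ∈ Set.Icc (0 : ℝ) 1) (r : ℝ) :
    a * r + s * a * (1 - a) ≤ maxs s r := by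
  obtain ⟨ha0, ha1⟩ := ha
  unfold maxs
  split_ifs with h
  · rcases le_abs'.mp h with hr | hr
    · rw [max_eq_left (by linarith)]
      nlinarith [mul_nonneg ha0 (by linarith : 0 ≤ -s - r), mul_nonneg hs.le (sq_nonneg a)]
    · rw [max_eq_right (by linarith)]
      nlinarith [mul_nonneg (by linarith : 0 ≤ 1 - a) (by nlinarith : 0 ≤ r - s * a)]
  · rw [le_div_iff₀ (by positivity)]
    nlinarith [sq_nonneg (r + s - 2 * s * a)]

lemma exists_affine_eq_maxs (hs : 0 < s) (r : ℝ) :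
    ∃ a ∈ Set.Icc (0 : ℝ) 1, a * r + s * a * (1 - a) = maxs s r := by
  unfold maxs
  split_ifs with h
  · rcases le_abs'.mp h with hr | hr
    · exact ⟨0, by norm_num, by rw [max_eq_left (by linarith)]; ring⟩
    · exact ⟨1, by norm_num, by rw [max_eq_right (by linarith)]; ring⟩
  · obtain ⟨hr0, hr1⟩ := abs_lt.mp (not_le.mp h)
    refine ⟨(r + s) / (2 * s), ⟨div_nonneg (by linarith) (by positivity), ?_⟩, ?_⟩
    · rw [div_le_one (by positivity)]
      linarith
    · field_simp
      ring

lemma maxs_nonneg (hs : 0 < s) (r : ℝ) : 0 ≤ maxs s r := by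
  simpa using affine_le_maxs hs (a := 0) ⟨le_rfl, zero_le_one⟩ r

lemma maxs_one (hs : s ≤ 1) : maxs s 1 = 1 := by
  simp [maxs, hs]

lemma monotone_maxs (hs : 0 < s) : Monotone (maxs s) := by
  intro u v huv
  obtain ⟨a, ha, hu⟩ := exists_affine_eq_maxs hs u
  calc maxs s u = a * u + s * a * (1 - a) := hu.symm
    _ ≤ a * v + s * a * (1 - a) := by gcongr; exact ha.1
    _ ≤ maxs s v := affine_le_maxs hs ha v

lemma convexOn_maxs (hs : 0 < s) : ConvexOn ℝ Set.univ (maxs s) := by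
  refine ⟨convex_univ, fun x _ y _ θ η hθ hη hθη => ?_⟩
  obtain ⟨a, ha, hz⟩ := exists_affine_eq_maxs hs (θ • x + η • y)
  have hx := mul_le_mul_of_nonneg_left (affine_le_maxs hs ha x) hθ
  have hy := mul_le_mul_of_nonneg_left (affine_le_maxs hs ha y) hη
  rw [← hz]
  simp only [smul_eq_mul] at hx hy ⊢
  linear_combination hx + hy - s * a * (1 - a) * hθη

end SmoothedMax

noncomputable def radialFactor (s γ x : ℝ) : ℝ :=
  1 - maxs s (1 - γ / x)

section RadialFactor

variable {s γ : ℝ}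

lemma radialFactor_mem_Icc (hs : s ∈ Set.Ioc (0 : ℝ) 1) (hγ : 0 ≤ γ) {x : ℝ} (hx : 0 ≤ x) :
    radialFactor s γ x ∈ Set.Icc (0 : ℝ) 1 := by
  have h := monotone_maxs hs.1 (by linarith [div_nonneg hγ hx] : 1 - γ / x ≤ 1)
  rw [maxs_one hs.2] at h
  exact ⟨sub_nonneg.mpr h, sub_le_self _ (maxs_nonneg hs.1 _)⟩

lemma radialFactor_mul_eq_secant (hs : s ≤ 1) (hγ : γ ≠ 0) {x : ℝ} (hx : x ≠ 0) :
    radialFactor s γ x * x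
      = γ * ((maxs s (1 - γ / x) - maxs s 1) / ((1 - γ / x) - 1)) := by
  rw [radialFactor, maxs_one hs, show 1 - γ / x - 1 = -(γ / x) by ring]
  field_simp
  ring

lemma monotoneOn_radialFactor_mul (hs : s ∈ Set.Ioc (0 : ℝ) 1) (hγ : 0 < γ) :
    MonotoneOn (fun x => radialFactor s γ x * x) (Set.Ici 0) := by
  intro x hx y hy hxy
  rcases (Set.mem_Ici.mp hx).eq_or_lt with rfl | hx0
  · simpa using mul_nonneg (radialFactor_mem_Icc hs hγ.le hy).1 hy
  have hy0 := hx0.trans_le hxy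
  dsimp only
  rw [radialFactor_mul_eq_secant hs.2 hγ.ne' hx0.ne',
    radialFactor_mul_eq_secant hs.2 hγ.ne' hy0.ne']
  refine mul_le_mul_of_nonneg_left ?_ hγ.le
  refine (convexOn_maxs hs.1).secant_mono trivial trivial trivial ?_ ?_ ?_
  · simpa using ⟨hγ.ne', hx0.ne'⟩
  · simpa using ⟨hγ.ne', hy0.ne'⟩
  · gcongr

lemma monotoneOn_sub_radialFactor_mul (hs : 0 < s) (hγ : 0 < γ) :
    MonotoneOn (fun x => x - radialFactor s γ x * x) (Set.Ici 0) := by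
  have h (x : ℝ) : x - radialFactor s γ x * x = maxs s (1 - γ / x) * x := by
    rw [radialFactor]; ring
  intro x hx y hy hxy
  simp only [h]
  rcases (Set.mem_Ici.mp hx).eq_or_lt with rfl | hx0
  · simpa using mul_nonneg (maxs_nonneg hs _) hy
  have hmono : maxs s (1 - γ / x) ≤ maxs s (1 - γ / y) := by
    refine monotone_maxs hs (sub_le_sub_left ?_ 1)
    exact div_le_div_of_nonneg_left hγ.le hx0 hxy
  exact mul_le_mul hmono hxy hx0.le (maxs_nonneg hs _)

end RadialFactor

lemma abs_sub_le_of_monotoneOn_of_monotoneOn_sub {f : ℝ → ℝ} {S : Set ℝ}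
    (hf : MonotoneOn f S) (hg : MonotoneOn (fun x => x - f x) S) {x y : ℝ}
    (hx : x ∈ S) (hy : y ∈ S) : |f x - f y| ≤ |x - y| := by
  wlog hxy : x ≤ y generalizing x y
  · rw [abs_sub_comm, abs_sub_comm x]
    exact this hy hx (le_of_not_ge hxy)
  have h1 := hf hx hy hxy
  have h2 := hg hx hy hxy
  dsimp only at h2
  rw [abs_of_nonpos (by linarith), abs_of_nonpos (by linarith)]
  linarith

section InnerProductSpace

variable {E : Type*} [NormedAddCommGroup E] [InnerProductSpace ℝ E]

open RealInnerProductSpace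

lemma norm_smul_sub_smul_le {p q : ℝ} {a b : E} (hpq : p * q ∈ Set.Icc (0 : ℝ) 1)
    (h : |p * ‖a‖ - q * ‖b‖| ≤ |‖a‖ - ‖b‖|) : ‖p • a - q • b‖ ≤ ‖a - b‖ := by
  refine le_of_sq_le_sq ?_ (norm_nonneg _)
  have hcs : ⟪a, b⟫ ≤ ‖a‖ * ‖b‖ := real_inner_le_norm a b
  have hsq := sq_le_sq.mpr h
  rw [norm_sub_sq_real, norm_sub_sq_real, norm_smul, norm_smul, real_inner_smul_left,
    real_inner_smul_right, Real.norm_eq_abs, Real.norm_eq_abs, mul_pow, mul_pow, sq_abs, sq_abs]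
  nlinarith [mul_le_mul_of_nonneg_left hpq.2 (sub_nonneg.mpr hcs),
    mul_nonneg hpq.1 (sub_nonneg.mpr hcs)]

lemma norm_add_le_norm_add_of_inner_eq_zero {u y z : E} (hy : ⟪u, y⟫ = 0) (hz : ⟪u, z⟫ = 0)
    (h : ‖y‖ ≤ ‖z‖) : ‖u + y‖ ≤ ‖u + z‖ := by
  refine le_of_sq_le_sq ?_ (norm_nonneg _)
  rw [sq, sq, norm_add_sq_eq_norm_sq_add_norm_sq_real hy,
    norm_add_sq_eq_norm_sq_add_norm_sq_real hz]
  nlinarith [norm_nonneg y]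

end InnerProductSpace

section FrobeniusInner

variable {d : ℕ}

open Matrix RealInnerProductSpace

/- The Frobenius inner product `⟪A, B⟫ = trace (B Aᵀ)`; on symmetric matrices it is `frob`. -/
@[reducible] noncomputable def traceNormedAddCommGroup :
    NormedAddCommGroup (Matrix (Fin d) (Fin d) ℝ) :=
  toMatrixNormedAddCommGroup 1 PosDef.one

attribute [local instance] traceNormedAddCommGroup

@[reducible] noncomputable def traceInnerProductSpace :
    InnerProductSpace ℝ (Matrix (Fin d) (Fin d) ℝ) :=
  toMatrixInnerProductSpace 1 PosDef.one.posSemidef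

attribute [local instance] traceInnerProductSpace

lemma inner_smul_one_eq_zero (c : ℝ) {Y : Matrix (Fin d) (Fin d) ℝ} (hY : Y.trace = 0) :
    ⟪c • (1 : Matrix (Fin d) (Fin d) ℝ), Y⟫ = 0 := by
  show (Y * 1 * (c • 1)ᴴ).trace = 0
  simp [hY]

lemma fnorm_nonneg (A : Matrix (Fin d) (Fin d) ℝ) : 0 ≤ fnorm A :=
  Real.sqrt_nonneg _

lemma norm_eq_fnorm {A : Matrix (Fin d) (Fin d) ℝ} (hA : A.IsSymm) : ‖A‖ = fnorm A := by
  rw [norm_eq_sqrt_real_inner, fnorm, frob]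
  congr 1
  show (A * 1 * Aᴴ).trace = _
  rw [mul_one, conjTranspose_eq_transpose_of_trivial, hA.eq]

lemma fnorm_smul_one_add_le (c : ℝ) {Y Z : Matrix (Fin d) (Fin d) ℝ} (hY : Y.IsSymm)
    (hZ : Z.IsSymm) (hYtr : Y.trace = 0) (hZtr : Z.trace = 0) (h : fnorm Y ≤ fnorm Z) :
    fnorm (c • 1 + Y) ≤ fnorm (c • 1 + Z) := by
  have hsymm (W : Matrix (Fin d) (Fin d) ℝ) (hW : W.IsSymm) : (c • 1 + W).IsSymm :=
    (isSymm_one.smul c).add hW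
  rw [← norm_eq_fnorm (hsymm Y hY), ← norm_eq_fnorm (hsymm Z hZ)]
  rw [← norm_eq_fnorm hY, ← norm_eq_fnorm hZ] at h
  exact norm_add_le_norm_add_of_inner_eq_zero (inner_smul_one_eq_zero c hYtr)
    (inner_smul_one_eq_zero c hZtr) h

lemma fnorm_smul_sub_smul_le {p q : ℝ} {A B : Matrix (Fin d) (Fin d) ℝ} (hA : A.IsSymm)
    (hB : B.IsSymm) (hpq : p * q ∈ Set.Icc (0 : ℝ) 1)
    (h : |p * fnorm A - q * fnorm B| ≤ |fnorm A - fnorm B|) :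
    fnorm (p • A - q • B) ≤ fnorm (A - B) := by
  rw [← norm_eq_fnorm ((hA.smul p).sub (hB.smul q)), ← norm_eq_fnorm (hA.sub hB)]
  rw [← norm_eq_fnorm hA, ← norm_eq_fnorm hB] at h
  exact norm_smul_sub_smul_le hpq h

end FrobeniusInner

section Deviator

variable {d : ℕ}

lemma trace_dev (A : Matrix (Fin d) (Fin d) ℝ) : (dev A).trace = 0 := by
  rcases eq_or_ne d 0 with rfl | hd
  · exact Matrix.trace_fin_zero _
  · simp [dev, Matrix.trace_sub, hd]

lemma isSymm_dev {A : Matrix (Fin d) (Fin d) ℝ} (hA : A.IsSymm) : (dev A).IsSymm :=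
  hA.sub (Matrix.isSymm_one.smul _)

lemma smul_one_add_dev (A : Matrix (Fin d) (Fin d) ℝ) :
    (A.trace / d) • (1 : Matrix (Fin d) (Fin d) ℝ) + dev A = A := by
  rw [dev]; abel

lemma Rs_eq_smul_one_add (s γ : ℝ) (A : Matrix (Fin d) (Fin d) ℝ) :
    Rs s γ A = (A.trace / d) • 1 + radialFactor s γ (fnorm (dev A)) • dev A := by
  rw [Rs, radialFactor]
  split_ifs with h
  · rw [h, smul_zero, ← h, smul_one_add_dev]
  · conv_lhs => arg 1; rw [← smul_one_add_dev A]
    module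

end Deviator

theorem smoothed_resolvent_lipschitz_general
    (d : ℕ) (s : ℝ) (hs : s ∈ Set.Ioo (0 : ℝ) 1) (γ : ℝ) (hγ : 0 < γ)
    (σ τ : Matrix (Fin d) (Fin d) ℝ) (hσ : σ.IsSymm) (hτ : τ.IsSymm) :
    fnorm (Rs s γ τ - Rs s γ σ) ≤ fnorm (τ - σ) := by
  have hs' : s ∈ Set.Ioc (0 : ℝ) 1 := ⟨hs.1, hs.2.le⟩
  set kτ := radialFactor s γ (fnorm (dev τ))
  set kσ := radialFactor s γ (fnorm (dev σ))
  set c := τ.trace / d - σ.trace / d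
  have hR : Rs s γ τ - Rs s γ σ = c • 1 + (kτ • dev τ - kσ • dev σ) := by
    rw [Rs_eq_smul_one_add, Rs_eq_smul_one_add]
    module
  have hT : τ - σ = c • 1 + (dev τ - dev σ) := by
    conv_lhs => rw [← smul_one_add_dev τ, ← smul_one_add_dev σ]
    module
  have hkτ := radialFactor_mem_Icc hs' hγ.le (fnorm_nonneg (dev τ))
  have hkσ := radialFactor_mem_Icc hs' hγ.le (fnorm_nonneg (dev σ))
  rw [hR, hT]
  refine fnorm_smul_one_add_le c (((isSymm_dev hτ).smul _).sub ((isSymm_dev hσ).smul _))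
    ((isSymm_dev hτ).sub (isSymm_dev hσ)) (by simp [trace_dev]) (by simp [trace_dev]) ?_
  refine fnorm_smul_sub_smul_le (isSymm_dev hτ) (isSymm_dev hσ)
    ⟨mul_nonneg hkτ.1 hkσ.1, mul_le_one₀ hkτ.2 hkσ.1 hkσ.2⟩ ?_
  exact abs_sub_le_of_monotoneOn_of_monotoneOn_sub (monotoneOn_radialFactor_mul hs' hγ)
    (monotoneOn_sub_radialFactor_mul hs.1 hγ) (fnorm_nonneg _) (fnorm_nonneg _)

/-- For every `s ∈ (0,1)` and `γ > 0`, the smoothed von Mises resolvent `R_s` is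
Lipschitz continuous with constant 1 on the symmetric matrices. -/
theorem smoothed_resolvent_lipschitz
    (d : ℕ) (hd : 0 < d) (s : ℝ) (hs : s ∈ Set.Ioo (0 : ℝ) 1) (γ : ℝ) (hγ : 0 < γ)
    (σ τ : Matrix (Fin d) (Fin d) ℝ) (hσ : σ.IsSymm) (hτ : τ.IsSymm) :
    fnorm (Rs s γ τ - Rs s γ σ) ≤ fnorm (τ - σ) :=
  smoothed_resolvent_lipschitz_general d s hs γ hγ σ τ hσ hτ
end

section
/- Let s ∈ (0,1) and γ > 0. For every τ ∈ ℝ^{d×d}_s with τ^D ≠ 0 one has |max_s(1 − γ/|τ^D|) − max{0, 1 − γ/|τ^D|}| · |τ^D| ≤ γ·s/(4(1 − s)). Equivalently, the smoothed von Mises resolvent R_s satisfies |R_s(τ) − π_K(τ)| ≤ γ·s/(4(1 − s)) for all τ ∈ ℝ^{d×d}_s, where π_K(τ) := τ − max{0, 1 − γ/|τ^D|}·τ^D (with π_K(τ) := τ when τ^D = 0). -/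
open scoped Classical

/-- The projection `π_K` onto the von Mises admissible set
`K = {σ symmetric : |σ^D| ≤ γ}`. -/
noncomputable def projK {d : ℕ} (γ : ℝ) (τ : Matrix (Fin d) (Fin d) ℝ) :
    Matrix (Fin d) (Fin d) ℝ :=
  if dev τ = 0 then τ else τ - max 0 (1 - γ / fnorm (dev τ)) • dev τ

/-!
`max_s` agrees with `max 0` outside `(-s, s)`, and inside it exceeds `max 0` by at most `s / 4`
(attained at `0`). For `r = 1 - γ / ρ` the condition `r < s` forces `ρ < γ / (1 - s)`, so the
coefficient gap times `ρ = |τ^D|` is at most `γ s / (4 (1 - s))`. Finally `R_s(τ) - π_K(τ)` is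
exactly this coefficient gap times `τ^D`.
-/

lemma fnorm_smul {d : ℕ} (c : ℝ) (A : Matrix (Fin d) (Fin d) ℝ) :
    fnorm (c • A) = |c| * fnorm A := by
  unfold fnorm frob
  rw [Matrix.smul_mul, Matrix.mul_smul, smul_smul, Matrix.trace_smul, smul_eq_mul,
    Real.sqrt_mul (mul_self_nonneg c), Real.sqrt_mul_self_eq_abs]

lemma maxs_eq_max_of_le_abs {s r : ℝ} (h : s ≤ |r|) : maxs s r = max 0 r := by
  rw [maxs, if_pos h]

lemma abs_maxs_sub_max_le {s r : ℝ} (hs : 0 < s) (h : |r| < s) :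
    |maxs s r - max 0 r| ≤ s / 4 := by
  rw [maxs, if_neg (not_le.mpr h)]
  obtain ⟨hlo, hhi⟩ := abs_lt.mp h
  have hq : (r + s) ^ 2 / (4 * s) * (4 * s) = (r + s) ^ 2 := div_mul_cancel₀ _ (by positivity)
  rcases le_or_gt 0 r with hr | hr
  · rw [max_eq_right hr, abs_le]
    constructor <;> nlinarith [sq_nonneg (r - s)]
  · rw [max_eq_left hr.le, sub_zero, abs_le]
    constructor <;> nlinarith [sq_nonneg (r + s)]

lemma abs_maxs_sub_max_mul_le {s γ ρ : ℝ} (hs : s ∈ Set.Ioo (0 : ℝ) 1) (hγ : 0 ≤ γ) :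
    |maxs s (1 - γ / ρ) - max 0 (1 - γ / ρ)| * ρ ≤ γ * s / (4 * (1 - s)) := by
  obtain ⟨hs0, hs1⟩ := hs
  have h1s : 0 < 1 - s := by linarith
  by_cases hr : s ≤ |1 - γ / ρ|
  · rw [maxs_eq_max_of_le_abs hr, sub_self, abs_zero, zero_mul]
    positivity
  rw [not_le] at hr
  have hlt : 1 - s < γ / ρ := by linarith [(abs_lt.mp hr).2]
  have hρ0 : 0 < ρ := by
    by_contra! hρ
    linarith [div_nonpos_of_nonneg_of_nonpos hγ hρ]
  have hρle : ρ ≤ γ / (1 - s) := by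
    rw [lt_div_iff₀ hρ0] at hlt
    rw [le_div_iff₀ h1s]
    linarith
  calc |maxs s (1 - γ / ρ) - max 0 (1 - γ / ρ)| * ρ ≤ s / 4 * (γ / (1 - s)) :=
        mul_le_mul (abs_maxs_sub_max_le hs0 hr) hρle hρ0.le (by positivity)
    _ = γ * s / (4 * (1 - s)) := by field_simp

lemma Rs_sub_projK {d : ℕ} (s γ : ℝ) (τ : Matrix (Fin d) (Fin d) ℝ) :
    Rs s γ τ - projK γ τ =
      (max 0 (1 - γ / fnorm (dev τ)) - maxs s (1 - γ / fnorm (dev τ))) • dev τ := by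
  by_cases h : dev τ = 0
  · rw [Rs, projK, if_pos h, if_pos h, h, sub_self, smul_zero]
  · rw [Rs, projK, if_neg h, if_neg h, sub_smul]
    abel

theorem smoothed_resolvent_close_to_projection_general
    (d : ℕ) (s : ℝ) (hs : s ∈ Set.Ioo (0 : ℝ) 1) (γ : ℝ) (hγ : 0 < γ) :
    (∀ τ : Matrix (Fin d) (Fin d) ℝ, τ.IsSymm → dev τ ≠ 0 →
      |maxs s (1 - γ / fnorm (dev τ)) - max 0 (1 - γ / fnorm (dev τ))| * fnorm (dev τ)
        ≤ γ * s / (4 * (1 - s))) ∧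
    (∀ τ : Matrix (Fin d) (Fin d) ℝ, τ.IsSymm →
      fnorm (Rs s γ τ - projK γ τ) ≤ γ * s / (4 * (1 - s))) := by
  refine ⟨fun τ _ _ => abs_maxs_sub_max_mul_le hs hγ.le, fun τ _ => ?_⟩
  rw [Rs_sub_projK, fnorm_smul, abs_sub_comm]
  exact abs_maxs_sub_max_mul_le hs hγ.le

/-- Let `s ∈ (0,1)` and `γ > 0`.  For every symmetric `τ` with `τ^D ≠ 0` one has
`|max_s(1 - γ/|τ^D|) - max{0, 1 - γ/|τ^D|}| · |τ^D| ≤ γ s / (4 (1 - s))`;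
equivalently, the smoothed von Mises resolvent satisfies
`|R_s(τ) - π_K(τ)| ≤ γ s / (4 (1 - s))` for all symmetric `τ`. -/
theorem smoothed_resolvent_close_to_projection
    (d : ℕ) (hd : 0 < d) (s : ℝ) (hs : s ∈ Set.Ioo (0 : ℝ) 1) (γ : ℝ) (hγ : 0 < γ) :
    (∀ τ : Matrix (Fin d) (Fin d) ℝ, τ.IsSymm → dev τ ≠ 0 →
      |maxs s (1 - γ / fnorm (dev τ)) - max 0 (1 - γ / fnorm (dev τ))| * fnorm (dev τ)
        ≤ γ * s / (4 * (1 - s))) ∧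
    (∀ τ : Matrix (Fin d) (Fin d) ℝ, τ.IsSymm →
      fnorm (Rs s γ τ - projK γ τ) ≤ γ * s / (4 * (1 - s))) :=
  smoothed_resolvent_close_to_projection_general d s hs γ hγ
end

section
/- Let 𝔻 and 𝔼 be linear maps on ℝ^{d×d}_s with 𝔻 symmetric and coercive with constant γ_𝔻 > 0, and let R₀ : ℝ^{d×d}_s → ℝ^{d×d}_s be monotone and Lipschitz continuous with constant L. Define b(σ, τ) := 𝔻τ + 𝔼 R₀(𝔼*τ + σ), where 𝔼* is the adjoint of 𝔼. Then for all σ, σ̄, τ, τ̄ ∈ ℝ^{d×d}_s: (b(σ,τ) − b(σ̄,τ̄)) : (τ − τ̄) ≥ γ_𝔻|τ − τ̄|² − L|σ − σ̄|² − L‖𝔼‖·|τ − τ̄|·|σ − σ̄|, where ‖𝔼‖ is the operator norm of 𝔼. -/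
/-!
The Frobenius product makes `SymMat d` a real inner product space, and the estimate holds in any
such space. With `a = 𝔼*τ + σ` and `r = R₀ a - R₀ ā`, the adjoint identity turns the `𝔼`-part of
`(b(σ,τ) - b(σ̄,τ̄)) : (τ - τ̄)` into `r : (a - ā) - r : (σ - σ̄)`. The first term is nonnegative by
monotonicity; the second is at most `L |a - ā| |σ - σ̄|` by Cauchy–Schwarz and the Lipschitz
bound, and `|a - ā| ≤ ‖𝔼‖ |τ - τ̄| + |σ - σ̄|` since `‖𝔼*‖ ≤ ‖𝔼‖`. Coercivity of `𝔻` supplies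
`γ_𝔻 |τ - τ̄|²`.
-/

def SymMat (d : ℕ) : Submodule ℝ (Matrix (Fin d) (Fin d) ℝ) where
  carrier := {A | A.IsSymm}
  add_mem' := fun ha hb => ha.add hb
  zero_mem' := Matrix.isSymm_zero
  smul_mem' := fun c _ hA => hA.smul c

noncomputable def frobE {d : ℕ} (x y : SymMat d) : ℝ :=
  Matrix.trace ((x : Matrix (Fin d) (Fin d) ℝ) * (y : Matrix (Fin d) (Fin d) ℝ))

noncomputable def fnormE {d : ℕ} (x : SymMat d) : ℝ :=
  Real.sqrt (frobE x x)

open scoped Matrix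

namespace SymMat

variable {d : ℕ}

lemma frobE_comm (x y : SymMat d) : frobE x y = frobE y x :=
  Matrix.trace_mul_comm _ _

lemma frobE_self_eq_trace (x : SymMat d) :
    frobE x x = ((x : Matrix (Fin d) (Fin d) ℝ)ᴴ * x).trace := by
  rw [Matrix.conjTranspose_eq_transpose_of_trivial, x.2.eq]; rfl

@[reducible]
noncomputable def frobCore : InnerProductSpace.Core ℝ (SymMat d) where
  inner := frobE
  conj_inner_symm x y := frobE_comm y x
  re_inner_nonneg x := by
    rw [RCLike.re_to_real, frobE_self_eq_trace]
    exact (Matrix.posSemidef_conjTranspose_mul_self _).trace_nonneg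
  add_left x y z := by simp [frobE, Matrix.add_mul]
  smul_left x y r := by simp [frobE]
  definite x hx := by
    rw [frobE_self_eq_trace, Matrix.trace_conjTranspose_mul_self_eq_zero_iff] at hx
    exact Subtype.ext hx

noncomputable instance : NormedAddCommGroup (SymMat d) :=
  @InnerProductSpace.Core.toNormedAddCommGroup ℝ _ _ _ _ frobCore

noncomputable instance : InnerProductSpace ℝ (SymMat d) :=
  InnerProductSpace.ofCore frobCore.toCore

lemma inner_eq_frobE (x y : SymMat d) : inner ℝ x y = frobE x y := rfl

lemma norm_eq_fnormE (x : SymMat d) : ‖x‖ = fnormE x := rfl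

lemma nontrivial_of_pos (hd : 0 < d) : Nontrivial (SymMat d) := by
  have : NeZero d := ⟨hd.ne'⟩
  exact nontrivial_of_ne ⟨1, Matrix.isSymm_one⟩ 0 fun h =>
    one_ne_zero (congrArg Subtype.val h)

end SymMat

open RealInnerProductSpace

lemma nonneg_of_norm_le_mul_norm {X Y : Type*} [NormedAddCommGroup X] [Nontrivial X]
    [SeminormedAddCommGroup Y] {f : X → Y} {c : ℝ} (hf : ∀ x, ‖f x‖ ≤ c * ‖x‖) : 0 ≤ c := by
  obtain ⟨x, hx⟩ := exists_ne (0 : X)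
  exact nonneg_of_mul_nonneg_left ((norm_nonneg _).trans (hf x)) (norm_pos_iff.2 hx)

section CoercivityEstimate

variable {V W : Type*} [SeminormedAddCommGroup V] [InnerProductSpace ℝ V]
  [SeminormedAddCommGroup W] [InnerProductSpace ℝ W]

lemma norm_apply_le_of_adjoint {E : W → V} {Estar : V → W} {c : ℝ} (hc : 0 ≤ c)
    (hadj : ∀ x y, ⟪E x, y⟫ = ⟪x, Estar y⟫) (hE : ∀ w, ‖E w‖ ≤ c * ‖w‖) (v : V) :
    ‖Estar v‖ ≤ c * ‖v‖ := by
  have hsq : ‖Estar v‖ * ‖Estar v‖ ≤ c * ‖v‖ * ‖Estar v‖ := calc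
    ‖Estar v‖ * ‖Estar v‖ = ⟪E (Estar v), v⟫ := by rw [hadj, real_inner_self_eq_norm_mul_norm]
    _ ≤ ‖E (Estar v)‖ * ‖v‖ := real_inner_le_norm _ _
    _ ≤ c * ‖Estar v‖ * ‖v‖ := by gcongr; exact hE _
    _ = c * ‖v‖ * ‖Estar v‖ := by ring
  rcases (norm_nonneg (Estar v)).eq_or_lt with h | h
  · rw [← h]
    positivity
  · exact le_of_mul_le_mul_right hsq h

lemma inner_adjoint_monotone_sub_ge {E : W → V} {Estar : V →ₗ[ℝ] W} {R0 : W → W} {L nE : ℝ}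
    (hL : 0 ≤ L) (hadj : ∀ x y, ⟪E x, y⟫ = ⟪x, Estar y⟫)
    (hmono : ∀ a b, 0 ≤ ⟪R0 a - R0 b, a - b⟫) (hlip : ∀ a b, ‖R0 a - R0 b‖ ≤ L * ‖a - b‖)
    (hEstar : ∀ v, ‖Estar v‖ ≤ nE * ‖v‖) (σ σ' : W) (τ τ' : V) :
    -(L * ‖σ - σ'‖ ^ 2 + L * nE * ‖τ - τ'‖ * ‖σ - σ'‖)
      ≤ ⟪E (R0 (Estar τ + σ)) - E (R0 (Estar τ' + σ')), τ - τ'⟫ := by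
  set a := Estar τ + σ
  set a' := Estar τ' + σ'
  set r := R0 a - R0 a'
  have hdiff : a - a' = Estar (τ - τ') + (σ - σ') := by
    simp only [a, a', map_sub]
    abel
  have hsplit : ⟪E (R0 a) - E (R0 a'), τ - τ'⟫ = ⟪r, a - a'⟫ - ⟪r, σ - σ'⟫ := by
    rw [inner_sub_left, hadj, hadj, ← inner_sub_left, ← inner_sub_right, hdiff,
      add_sub_cancel_right]
  have hnorm : ‖a - a'‖ ≤ nE * ‖τ - τ'‖ + ‖σ - σ'‖ := by
    rw [hdiff]
    exact (norm_add_le _ _).trans (add_le_add_left (hEstar _) _)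
  have hcross : ⟪r, σ - σ'⟫ ≤ L * ‖σ - σ'‖ ^ 2 + L * nE * ‖τ - τ'‖ * ‖σ - σ'‖ := calc
    ⟪r, σ - σ'⟫ ≤ ‖r‖ * ‖σ - σ'‖ := real_inner_le_norm _ _
    _ ≤ L * (nE * ‖τ - τ'‖ + ‖σ - σ'‖) * ‖σ - σ'‖ := by
      gcongr
      exact (hlip a a').trans (by gcongr)
    _ = L * ‖σ - σ'‖ ^ 2 + L * nE * ‖τ - τ'‖ * ‖σ - σ'‖ := by ring
  linarith [hmono a a']

theorem inner_sub_ge_of_coercive_of_monotone (D : V →ₗ[ℝ] V) (E : W → V) (Estar : V →ₗ[ℝ] W)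
    (R0 : W → W) {γ L nE : ℝ} (hL : 0 ≤ L) (hnE : 0 ≤ nE) (hD : ∀ v, γ * ‖v‖ ^ 2 ≤ ⟪D v, v⟫)
    (hadj : ∀ x y, ⟪E x, y⟫ = ⟪x, Estar y⟫)
    (hmono : ∀ a b, 0 ≤ ⟪R0 a - R0 b, a - b⟫) (hlip : ∀ a b, ‖R0 a - R0 b‖ ≤ L * ‖a - b‖)
    (hE : ∀ w, ‖E w‖ ≤ nE * ‖w‖) (σ σ' : W) (τ τ' : V) :
    γ * ‖τ - τ'‖ ^ 2 - L * ‖σ - σ'‖ ^ 2 - L * nE * ‖τ - τ'‖ * ‖σ - σ'‖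
      ≤ ⟪(D τ + E (R0 (Estar τ + σ))) - (D τ' + E (R0 (Estar τ' + σ'))), τ - τ'⟫ := by
  have hR0 := inner_adjoint_monotone_sub_ge hL hadj hmono hlip
    (norm_apply_le_of_adjoint hnE hadj hE) σ σ' τ τ'
  rw [add_sub_add_comm, inner_add_left, ← map_sub]
  linarith [hD (τ - τ')]

end CoercivityEstimate

theorem b_coercivity_estimate_general
    (d : ℕ) (hd : 0 < d)
    (D E Estar : SymMat d →ₗ[ℝ] SymMat d)
    (γD : ℝ)
    (hDcoer : ∀ σ : SymMat d, γD * fnormE σ ^ 2 ≤ frobE (D σ) σ)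
    (hadj : ∀ σ τ : SymMat d, frobE (E σ) τ = frobE σ (Estar τ))
    (R0 : SymMat d → SymMat d) (L : ℝ)
    (hmono : ∀ a₁ a₂ : SymMat d, 0 ≤ frobE (R0 a₁ - R0 a₂) (a₁ - a₂))
    (hlip : ∀ a₁ a₂ : SymMat d, fnormE (R0 a₁ - R0 a₂) ≤ L * fnormE (a₁ - a₂))
    (nE : ℝ) (hnE : ∀ v : SymMat d, fnormE (E v) ≤ nE * fnormE v) :
    ∀ σ σ' τ τ' : SymMat d,
      γD * fnormE (τ - τ') ^ 2 - L * fnormE (σ - σ') ^ 2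
          - L * nE * fnormE (τ - τ') * fnormE (σ - σ')
        ≤ frobE ((D τ + E (R0 (Estar τ + σ))) - (D τ' + E (R0 (Estar τ' + σ'))))
            (τ - τ') := by
  simp only [← SymMat.norm_eq_fnormE, ← SymMat.inner_eq_frobE] at hDcoer hadj hmono hlip hnE ⊢
  have := SymMat.nontrivial_of_pos hd
  have hL : 0 ≤ L := nonneg_of_norm_le_mul_norm (f := fun a => R0 a - R0 0) fun a => by
    simpa using hlip a 0
  exact inner_sub_ge_of_coercive_of_monotone D E Estar R0 hL (nonneg_of_norm_le_mul_norm hnE)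
    hDcoer hadj hmono hlip hnE

/-- Let `𝔻` be symmetric and coercive with constant `γ_𝔻 > 0`, let `𝔼` be linear with
adjoint `𝔼*` and operator norm bounded by `nE`, and let `R₀` be monotone and Lipschitz
with constant `L`.  Then `b(σ,τ) := 𝔻τ + 𝔼R₀(𝔼*τ + σ)` satisfies
`(b(σ,τ) - b(σ̄,τ̄)) : (τ - τ̄) ≥ γ_𝔻|τ-τ̄|² - L|σ-σ̄|² - L‖𝔼‖·|τ-τ̄|·|σ-σ̄|`. -/
theorem b_coercivity_estimate
    (d : ℕ) (hd : 0 < d)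
    (D E Estar : SymMat d →ₗ[ℝ] SymMat d)
    (hDsymm : ∀ σ τ : SymMat d, frobE (D σ) τ = frobE σ (D τ))
    (γD : ℝ) (hγD : 0 < γD)
    (hDcoer : ∀ σ : SymMat d, γD * fnormE σ ^ 2 ≤ frobE (D σ) σ)
    (hadj : ∀ σ τ : SymMat d, frobE (E σ) τ = frobE σ (Estar τ))
    (R0 : SymMat d → SymMat d) (L : ℝ)
    (hmono : ∀ a₁ a₂ : SymMat d, 0 ≤ frobE (R0 a₁ - R0 a₂) (a₁ - a₂))
    (hlip : ∀ a₁ a₂ : SymMat d, fnormE (R0 a₁ - R0 a₂) ≤ L * fnormE (a₁ - a₂))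
    (nE : ℝ) (hnE : ∀ v : SymMat d, fnormE (E v) ≤ nE * fnormE v) :
    ∀ σ σ' τ τ' : SymMat d,
      γD * fnormE (τ - τ') ^ 2 - L * fnormE (σ - σ') ^ 2
          - L * nE * fnormE (τ - τ') * fnormE (σ - σ')
        ≤ frobE ((D τ + E (R0 (Estar τ + σ))) - (D τ' + E (R0 (Estar τ' + σ'))))
            (τ - τ') :=
  b_coercivity_estimate_general d hd D E Estar γD hDcoer hadj R0 L hmono hlip nE hnE
end

section
/- Let 𝔻 and 𝔼 be linear maps on ℝ^{d×d}_s with 𝔻 symmetric and coercive with constant γ_𝔻 > 0, and let R₀ : ℝ^{d×d}_s → ℝ^{d×d}_s be Lipschitz continuous with constant L and satisfy (R₀(a) − R₀(b)):(a − b) ≥ −ε|a − b|² for all a, b ∈ ℝ^{d×d}_s, where 0 ≤ ε < γ_𝔻/‖𝔼‖². Define b(σ, τ) := 𝔻τ + 𝔼 R₀(𝔼*τ + σ). Then with m := γ_𝔻 − ε‖𝔼‖² > 0 there exists a constant C ≥ 0 such that for all σ, σ̄, τ, τ̄ ∈ ℝ^{d×d}_s: (b(σ,τ) − b(σ̄,τ̄))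 : (τ − τ̄) + C(|σ − σ̄| + |τ − τ̄|)·|σ − σ̄| ≥ m|τ − τ̄|², where 𝔼* is the adjoint of 𝔼 and ‖𝔼‖ its operator norm. -/
variable {d : ℕ}

lemma frobE_sum (x y : SymMat d) :
    frobE x y = ∑ p : Fin d × Fin d, (x : Matrix (Fin d) (Fin d) ℝ) p.1 p.2
      * (y : Matrix (Fin d) (Fin d) ℝ) p.1 p.2 := by
  rw [Fintype.sum_prod_type]
  simp only [frobE, Matrix.trace, Matrix.diag, Matrix.mul_apply]
  refine Finset.sum_congr rfl fun i _ => Finset.sum_congr rfl fun j _ => ?_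
  rw [y.2.apply j i]

lemma frobE_comm (x y : SymMat d) : frobE x y = frobE y x := Matrix.trace_mul_comm _ _

lemma frobE_add_left (x y z : SymMat d) : frobE (x + y) z = frobE x z + frobE y z := by
  simp [frobE, add_mul]

lemma frobE_add_right (x y z : SymMat d) : frobE x (y + z) = frobE x y + frobE x z := by
  simp [frobE, mul_add]

lemma frobE_sub_left (x y z : SymMat d) : frobE (x - y) z = frobE x z - frobE y z := by
  simp [frobE, sub_mul]

lemma frobE_sub_right (x y z : SymMat d) : frobE x (y - z) = frobE x y - frobE x z := by
  simp [frobE, mul_sub]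

lemma frobE_self_nonneg (x : SymMat d) : 0 ≤ frobE x x := by
  rw [frobE_sum]
  exact Finset.sum_nonneg fun p _ => mul_self_nonneg _

lemma fnormE_nonneg (x : SymMat d) : 0 ≤ fnormE x := Real.sqrt_nonneg _

lemma fnormE_sq (x : SymMat d) : fnormE x ^ 2 = frobE x x :=
  Real.sq_sqrt (frobE_self_nonneg x)

lemma frobE_le (x y : SymMat d) : frobE x y ≤ fnormE x * fnormE y := by
  have h := Finset.sum_mul_sq_le_sq_mul_sq Finset.univ
    (fun p : Fin d × Fin d => (x : Matrix (Fin d) (Fin d) ℝ) p.1 p.2)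
    (fun p : Fin d × Fin d => (y : Matrix (Fin d) (Fin d) ℝ) p.1 p.2)
  have hx : frobE x x = ∑ p : Fin d × Fin d, (x : Matrix (Fin d) (Fin d) ℝ) p.1 p.2 ^ 2 := by
    rw [frobE_sum]; exact Finset.sum_congr rfl fun p _ => (sq _).symm
  have hy : frobE y y = ∑ p : Fin d × Fin d, (y : Matrix (Fin d) (Fin d) ℝ) p.1 p.2 ^ 2 := by
    rw [frobE_sum]; exact Finset.sum_congr rfl fun p _ => (sq _).symm
  have h2 : (frobE x y)^2 ≤ (fnormE x * fnormE y)^2 := by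
    rw [mul_pow, fnormE_sq, fnormE_sq, frobE_sum, hx, hy]; exact h
  have h3 : |frobE x y| ≤ fnormE x * fnormE y := by
    rw [← Real.sqrt_sq_eq_abs,
      ← Real.sqrt_sq (mul_nonneg (fnormE_nonneg x) (fnormE_nonneg y))]
    exact Real.sqrt_le_sqrt h2
  linarith [le_abs_self (frobE x y)]

lemma fnormE_add_le (x y : SymMat d) : fnormE (x + y) ≤ fnormE x + fnormE y := by
  have h1 : frobE (x + y) (x + y) ≤ (fnormE x + fnormE y)^2 := by
    rw [frobE_add_left, frobE_add_right, frobE_add_right]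
    have := frobE_comm y x
    have := frobE_le x y
    nlinarith [fnormE_sq x, fnormE_sq y]
  rw [fnormE, ← Real.sqrt_sq (add_nonneg (fnormE_nonneg x) (fnormE_nonneg y))]
  exact Real.sqrt_le_sqrt h1

lemma fnormE_pos_one {d : ℕ} (hd : 0 < d) :
    0 < fnormE (⟨1, Matrix.isSymm_one⟩ : SymMat d) := by
  have h : frobE (⟨1, Matrix.isSymm_one⟩ : SymMat d) (⟨1, Matrix.isSymm_one⟩ : SymMat d)
      = (d : ℝ) := by
    simp [frobE, Matrix.trace_one]
  rw [fnormE, h]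
  exact Real.sqrt_pos.mpr (by exact_mod_cast hd)


set_option maxHeartbeats 1000000 in
/-- Let `𝔻` be symmetric and coercive with constant `γ_𝔻 > 0`, let `𝔼` be linear with
adjoint `𝔼*` and operator norm bounded by `nE`, and let `R₀` be Lipschitz with constant
`L` and satisfy `(R₀(a) - R₀(b)) : (a - b) ≥ -ε|a-b|²` with `0 ≤ ε` and `ε‖𝔼‖² < γ_𝔻`.
Then with `m := γ_𝔻 - ε‖𝔼‖² > 0` there is `C ≥ 0` such that
`b(σ,τ) := 𝔻τ + 𝔼R₀(𝔼*τ + σ)` satisfies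
`(b(σ,τ) - b(σ̄,τ̄)) : (τ - τ̄) + C(|σ-σ̄| + |τ-τ̄|)·|σ-σ̄| ≥ m|τ-τ̄|²`. -/
theorem b_semimonotone_coercivity_estimate
    (d : ℕ) (hd : 0 < d)
    (D E Estar : SymMat d →ₗ[ℝ] SymMat d)
    (hDsymm : ∀ σ τ : SymMat d, frobE (D σ) τ = frobE σ (D τ))
    (γD : ℝ) (hγD : 0 < γD)
    (hDcoer : ∀ σ : SymMat d, γD * fnormE σ ^ 2 ≤ frobE (D σ) σ)
    (hadj : ∀ σ τ : SymMat d, frobE (E σ) τ = frobE σ (Estar τ))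
    (nE : ℝ) (hnE : ∀ v : SymMat d, fnormE (E v) ≤ nE * fnormE v)
    (R0 : SymMat d → SymMat d) (L : ℝ)
    (hlip : ∀ a₁ a₂ : SymMat d, fnormE (R0 a₁ - R0 a₂) ≤ L * fnormE (a₁ - a₂))
    (ε : ℝ) (hε0 : 0 ≤ ε) (hεsmall : ε * nE ^ 2 < γD)
    (hsemimono : ∀ a₁ a₂ : SymMat d,
      -(ε * fnormE (a₁ - a₂) ^ 2) ≤ frobE (R0 a₁ - R0 a₂) (a₁ - a₂)) :
    0 < γD - ε * nE ^ 2 ∧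
    ∃ C : ℝ, 0 ≤ C ∧ ∀ σ σ' τ τ' : SymMat d,
      (γD - ε * nE ^ 2) * fnormE (τ - τ') ^ 2
        ≤ frobE ((D τ + E (R0 (Estar τ + σ))) - (D τ' + E (R0 (Estar τ' + σ'))))
            (τ - τ')
          + C * (fnormE (σ - σ') + fnormE (τ - τ')) * fnormE (σ - σ') := by
  -- the identity element, used to show nE ≥ 0 and L ≥ 0
  set e : SymMat d := ⟨1, Matrix.isSymm_one⟩ with he
  have hepos : 0 < fnormE e := fnormE_pos_one hd
  have hnE0 : 0 ≤ nE := by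
    have h1 := hnE e
    have h2 := fnormE_nonneg (E e)
    nlinarith
  have hL0 : 0 ≤ L := by
    have h1 := hlip e 0
    have h2 := fnormE_nonneg (R0 e - R0 0)
    simp only [sub_zero] at h1
    nlinarith
  -- adjoint bound
  have hEstar : ∀ w : SymMat d, fnormE (Estar w) ≤ nE * fnormE w := by
    intro w
    have h1 : frobE (Estar w) (Estar w) = frobE (E (Estar w)) w := (hadj _ _).symm
    have h2 : frobE (E (Estar w)) w ≤ fnormE (E (Estar w)) * fnormE w := frobE_le _ _
    have h3 : fnormE (E (Estar w)) ≤ nE * fnormE (Estar w) := hnE _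
    have h4 := fnormE_sq (Estar w)
    have h5 := fnormE_nonneg (Estar w)
    have h6 := fnormE_nonneg w
    rcases eq_or_lt_of_le h5 with h7 | h7
    · rw [← h7]; positivity
    · nlinarith
  refine ⟨by linarith, ε + L + 2 * ε * nE + L * nE, by positivity, ?_⟩
  intro σ σ' τ τ'
  set s := fnormE (σ - σ') with hs
  set t := fnormE (τ - τ') with ht
  have hs0 : 0 ≤ s := fnormE_nonneg _
  have ht0 : 0 ≤ t := fnormE_nonneg _
  set a : SymMat d := Estar τ + σ with ha
  set b : SymMat d := Estar τ' + σ' with hb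
  have hab : a - b = Estar (τ - τ') + (σ - σ') := by
    rw [ha, hb, map_sub]; abel
  set B := fnormE (a - b) with hB
  have hB0 : 0 ≤ B := fnormE_nonneg _
  have hBle : B ≤ nE * t + s := by
    rw [hB, hab]
    calc fnormE (Estar (τ - τ') + (σ - σ'))
        ≤ fnormE (Estar (τ - τ')) + s := fnormE_add_le _ _
      _ ≤ nE * t + s := by linarith [hEstar (τ - τ')]
  set r : SymMat d := R0 a - R0 b with hr
  -- decompose the difference
  have hdecomp : (D τ + E (R0 a)) - (D τ' + E (R0 b)) = D (τ - τ') + E r := by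
    rw [hr, map_sub, map_sub]; abel
  rw [hdecomp, frobE_add_left]
  have hEr : frobE (E r) (τ - τ') = frobE r (a - b) - frobE r (σ - σ') := by
    rw [hadj, ← frobE_sub_right]
    congr 1
    rw [hab]; abel
  rw [hEr]
  have h1 : γD * t ^ 2 ≤ frobE (D (τ - τ')) (τ - τ') := hDcoer _
  have h2 : -(ε * B ^ 2) ≤ frobE r (a - b) := hsemimono a b
  have h3 : frobE r (σ - σ') ≤ L * B * s := by
    calc frobE r (σ - σ') ≤ fnormE r * s := frobE_le _ _
      _ ≤ L * B * s := by
          have := hlip a b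
          nlinarith [fnormE_nonneg r]
  have hB2 : B ^ 2 ≤ (nE * t + s) ^ 2 := by nlinarith
  have hLBs : L * B * s ≤ L * (nE * t + s) * s := by
    nlinarith [mul_nonneg (mul_nonneg hL0 hs0) (sub_nonneg.mpr hBle)]
  have hεB2 : ε * B ^ 2 ≤ ε * (nE * t + s) ^ 2 := mul_le_mul_of_nonneg_left hB2 hε0
  have key : (γD - ε * nE ^ 2) * t ^ 2
      ≤ γD * t ^ 2 - ε * (nE * t + s) ^ 2 - L * (nE * t + s) * s
        + (ε + L + 2 * ε * nE + L * nE) * (s + t) * s := by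
    nlinarith [mul_nonneg (mul_nonneg hε0 hnE0) (mul_nonneg hs0 hs0),
      mul_nonneg (mul_nonneg hL0 hnE0) (mul_nonneg hs0 hs0),
      mul_nonneg hε0 (mul_nonneg hs0 ht0), mul_nonneg hL0 (mul_nonneg hs0 ht0)]
  linarith [h1, h2, h3, hεB2, hLBs, key]
end
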